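/- arXiv:1211.0696 — 7 statements merged into one kernel-verified Lean document; each statement's English description precedes it below -/
import Mathlib

section
/- For any interval Δ = [a,b] ⊂ ℝ with a < b, there exist integers k, j such that Δ is contained in the middle three-quarters of the interval J_{k,j} = [j·2^k, (j+8)·2^k] (i.e., Δ ⊂ [(j+1)·2^k, (j+7)·2^k]) and the lengths are comparable: |J_{k,j}| ≤ 8|Δ| and |Δ| ≤ |J_{k,j}|. -/
/-! Take `2^k` to be the dyadic scale of `b - a`, i.e. `2^k ≤ b - a < 2^(k+1)`, and let
`(j+1)·2^k` be the grid point of spacing `2^k` just below `a`. Then `b < a + 2^(k+1) < (j+4)·2^k`,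
so there is plenty of room inside `[(j+1)·2^k, (j+7)·2^k]`. -/

theorem exists_Icc_subset_Icc_mul_of_sub_le {α : Type*} [Field α] [LinearOrder α]
    [IsStrictOrderedRing α] [Archimedean α] {a b t : α} (ht : 0 < t) (hba : b - a ≤ 5 * t) :
    ∃ j : ℤ, Set.Icc a b ⊆ Set.Icc (((j : α) + 1) * t) (((j : α) + 7) * t) := by
  obtain ⟨i, ⟨hia, hai⟩, -⟩ := existsUnique_zsmul_near_of_pos ht a
  simp only [zsmul_eq_mul, Int.cast_add, Int.cast_one] at hia hai
  refine ⟨i - 1, Set.Icc_subset_Icc ?_ ?_⟩ <;> push_cast <;> linarith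

/-- For any interval `[a,b]` with `a < b`, there are `k j : ℤ` such that
`[a,b]` is contained in the middle three quarters of `J_{k,j} = [j·2^k, (j+8)·2^k]`,
and `|J_{k,j}| ≤ 8·|Δ|`, `|Δ| ≤ |J_{k,j}|`. -/
theorem stmt0 (a b : ℝ) (hab : a < b) :
    ∃ k j : ℤ, Set.Icc a b ⊆ Set.Icc (((j : ℝ) + 1) * 2 ^ k) (((j : ℝ) + 7) * 2 ^ k) ∧
      8 * (2 : ℝ) ^ k ≤ 8 * (b - a) ∧ b - a ≤ 8 * (2 : ℝ) ^ k := by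
  obtain ⟨k, hk_le, hk_lt⟩ := exists_mem_Ico_zpow (sub_pos.2 hab) one_lt_two
  rw [zpow_add_one₀ two_ne_zero] at hk_lt
  have hk_pos : (0 : ℝ) < 2 ^ k := zpow_pos two_pos k
  obtain ⟨j, hj⟩ := exists_Icc_subset_Icc_mul_of_sub_le (a := a) (b := b) hk_pos (by linarith)
  exact ⟨k, j, hj, by linarith, by linarith⟩
end

section
/- Let φ : ℝ → ℂ be a Schwartz function and let f : ℝ → ℂ satisfy |f(s) - f(t)| ≤ |s - t| for all s, t ∈ ℝ. Suppose a ∈ ℝ is such that the integral of τ ↦ φ(τ) e^{-2πi a τ} over ℝ vanishes (e.g., a ∉ supp φ̂). Define g(s) = ∫_ℝ φ(s - x) e^{2πi a x} f(x) dx. Then there is a constant C, depending only on φ (not on a or f), such that |g(s) - g(t)| ≤ C|s - t| for all s, t ∈ ℝ. -/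
/-!
Write `e(x) = exp(2πiax)`. Differentiating under the integral sign, `g = φ ⋆ (e f)` has
derivative `φ' ⋆ (e f)`. Since `𝓕 φ' (a) = 2πia 𝓕 φ (a) = 0`, every translate `x ↦ φ'(s - x) e(x)`
integrates to zero, so `g'(s) = ∫ φ'(s - x) e(x) (f(x) - f(s)) dx`, which the Lipschitz bound
`|f(x) - f(s)| ≤ |x - s|` controls by `∫ |y| |φ'(y)| dy`. The mean value theorem concludes.
-/

open Real MeasureTheory
open scoped FourierTransform

theorem fourier_eq_integral_mul_exp (ψ : ℝ → ℂ) (a : ℝ) :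
    𝓕 ψ a = ∫ τ : ℝ, ψ τ * Complex.exp (-(2 * π * Complex.I * a * τ)) := by
  rw [Real.fourier_real_eq_integral_exp_smul]
  congr 1 with τ
  rw [smul_eq_mul, mul_comm]
  congr 2
  push_cast
  ring

theorem norm_exp_two_pi_I_mul (a x : ℝ) : ‖Complex.exp (2 * π * Complex.I * a * x)‖ = 1 := by
  simp [Complex.norm_exp]

theorem integral_comp_sub_mul_exp_eq_zero {ψ : ℝ → ℂ} {a : ℝ} (hψ : 𝓕 ψ a = 0) (s : ℝ) :
    ∫ x : ℝ, ψ (s - x) * Complex.exp (2 * π * Complex.I * a * x) = 0 := by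
  have key : ∀ x : ℝ, ψ (s - x) * Complex.exp (2 * π * Complex.I * a * x) =
      ψ (s - x) * Complex.exp (-(2 * π * Complex.I * a * ↑(s - x))) *
        Complex.exp (2 * π * Complex.I * a * s) := by
    intro x
    rw [mul_assoc (ψ (s - x)) (Complex.exp _), ← Complex.exp_add]
    congr 2
    push_cast
    ring
  simp_rw [key]
  rw [integral_sub_left_eq_self (fun τ => ψ τ * Complex.exp (-(2 * π * Complex.I * a * τ)) *
      Complex.exp (2 * π * Complex.I * a * s)), integral_mul_const,
    ← fourier_eq_integral_mul_exp, hψ, zero_mul]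

theorem SchwartzMap.fourier_deriv_eq_zero (φ : SchwartzMap ℝ ℂ) {a : ℝ} (hφ : 𝓕 (⇑φ) a = 0) :
    𝓕 (deriv φ) a = 0 := by
  simp only [Real.fourier_deriv φ.integrable φ.differentiable (derivCLM ℝ ℂ φ).integrable, hφ,
    smul_zero]

theorem norm_integral_mul_le_of_integral_eq_zero {K f : ℝ → ℂ} {L : NNReal} (hK : Integrable K)
    (hK0 : ∫ x, K x = 0) (hf : LipschitzWith L f) {s : ℝ}
    (hKs : Integrable fun x => |x - s| * ‖K x‖) :
    ‖∫ x, K x * f x‖ ≤ L * ∫ x, |x - s| * ‖K x‖ := by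
  have hKf : ∀ x, ‖K x * (f x - f s)‖ ≤ L * (|x - s| * ‖K x‖) := fun x => by
    rw [norm_mul, mul_comm, ← mul_assoc, ← Real.norm_eq_abs]
    exact mul_le_mul_of_nonneg_right (hf.norm_sub_le x s) (norm_nonneg _)
  have hint : Integrable fun x => K x * (f x - f s) :=
    (hKs.const_mul L).mono' (hK.aestronglyMeasurable.mul
      (hf.continuous.sub continuous_const).aestronglyMeasurable) (ae_of_all _ hKf)
  calc ‖∫ x, K x * f x‖ = ‖∫ x, K x * (f x - f s)‖ := by
        rw [← add_zero (∫ x, K x * (f x - f s)), ← zero_mul (f s), ← hK0, ← integral_mul_const,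
          ← integral_add hint (hK.mul_const _)]
        simp only [mul_sub, sub_add_cancel]
    _ ≤ ∫ x, L * (|x - s| * ‖K x‖) :=
        norm_integral_le_of_norm_le (hKs.const_mul L) (ae_of_all _ hKf)
    _ = L * ∫ x, |x - s| * ‖K x‖ := integral_const_mul _ _

theorem norm_integral_comp_sub_mul_exp_mul_le {ψ f : ℝ → ℂ} {a : ℝ} {L : NNReal}
    (hψ : Integrable ψ) (hψ1 : Integrable fun y => |y| * ‖ψ y‖) (hψa : 𝓕 ψ a = 0)
    (hf : LipschitzWith L f) (s : ℝ) :
    ‖∫ x, ψ (s - x) * Complex.exp (2 * π * Complex.I * a * x) * f x‖ ≤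
      L * ∫ y, |y| * ‖ψ y‖ := by
  have hnorm : ∀ x, |x - s| * ‖ψ (s - x) * Complex.exp (2 * π * Complex.I * a * x)‖ =
      |s - x| * ‖ψ (s - x)‖ := fun x => by
    rw [norm_mul, norm_exp_two_pi_I_mul, mul_one, abs_sub_comm]
  have hK : Integrable fun x => ψ (s - x) * Complex.exp (2 * π * Complex.I * a * x) :=
    (hψ.comp_sub_left s).norm.mono'
      ((hψ.comp_sub_left s).aestronglyMeasurable.mul (by fun_prop))
      (ae_of_all _ fun x => by rw [norm_mul, norm_exp_two_pi_I_mul, mul_one])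
  have := norm_integral_mul_le_of_integral_eq_zero hK (integral_comp_sub_mul_exp_eq_zero hψa s) hf
    (s := s) (by simp_rw [hnorm]; exact hψ1.comp_sub_left s)
  simp_rw [hnorm, integral_sub_left_eq_self (fun y => |y| * ‖ψ y‖)] at this
  exact this

theorem integrable_inv_one_add_abs_sq : Integrable fun y : ℝ => ((1 + |y|) ^ 2)⁻¹ := by
  refine (integrable_one_add_norm (E := ℝ) (μ := volume) (r := 2) (by norm_num)).congr
    (ae_of_all _ fun y => ?_)
  simp [Real.rpow_neg (by positivity : (0 : ℝ) ≤ 1 + |y|)]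

/-- The cubic decay of `ψ` absorbs the linear growth of `G` and leaves the integrable weight
`(1 + |s - x|)⁻²`; moving `s'` within distance `1` of `s` costs the factor `2 ^ 3`. -/
theorem SchwartzMap.exists_integrable_bound_comp_sub_mul (ψ : SchwartzMap ℝ ℂ) {G : ℝ → ℂ}
    {A : ℝ} (hG : ∀ x, ‖G x‖ ≤ A * (1 + |x|)) (s : ℝ) :
    ∃ bound : ℝ → ℝ, Integrable bound ∧
      ∀ s' ∈ Metric.ball s 1, ∀ x, ‖ψ (s' - x) * G x‖ ≤ bound x := by
  obtain ⟨B, hB⟩ : ∃ B, ∀ z : ℝ, (1 + |z|) ^ 3 * ‖ψ z‖ ≤ B :=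
    ⟨_, fun z => by
      simpa using ψ.one_add_le_sup_seminorm_apply (𝕜 := ℝ) (m := (3, 0)) le_rfl le_rfl z⟩
  refine ⟨fun x => 8 * B * A * (1 + |s|) * ((1 + |s - x|) ^ 2)⁻¹,
    (integrable_inv_one_add_abs_sq.comp_sub_left s).const_mul _, fun s' hs' x => ?_⟩
  have hA : 0 ≤ A := (norm_nonneg _).trans ((hG 0).trans (by simp))
  have hx : 1 + |x| ≤ (1 + |s|) * (1 + |s - x|) := by
    have : |x| ≤ |s| + |s - x| := by simpa using abs_sub s (s - x)
    nlinarith [abs_nonneg s, abs_nonneg (s - x)]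
  have hshift : 1 + |s - x| ≤ 2 * (1 + |s' - x|) := by
    have : |s - s'| < 1 := by rwa [Metric.mem_ball, Real.dist_eq, abs_sub_comm] at hs'
    linarith [abs_sub_le s s' x, abs_nonneg (s' - x)]
  have hdecay : (1 + |s - x|) ^ 3 * ‖ψ (s' - x)‖ ≤ 8 * B :=
    calc (1 + |s - x|) ^ 3 * ‖ψ (s' - x)‖ ≤ (2 * (1 + |s' - x|)) ^ 3 * ‖ψ (s' - x)‖ := by gcongr
      _ = 8 * ((1 + |s' - x|) ^ 3 * ‖ψ (s' - x)‖) := by ring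
      _ ≤ 8 * B := by gcongr; exact hB _
  dsimp only
  rw [norm_mul, ← div_eq_mul_inv, le_div_iff₀ (by positivity)]
  calc ‖ψ (s' - x)‖ * ‖G x‖ * (1 + |s - x|) ^ 2
      ≤ ‖ψ (s' - x)‖ * (A * ((1 + |s|) * (1 + |s - x|))) * (1 + |s - x|) ^ 2 := by
        gcongr; exact (hG x).trans (by gcongr)
    _ = A * (1 + |s|) * ((1 + |s - x|) ^ 3 * ‖ψ (s' - x)‖) := by ring
    _ ≤ A * (1 + |s|) * (8 * B) := by gcongr
    _ = 8 * B * A * (1 + |s|) := by ring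

theorem SchwartzMap.hasDerivAt_integral_comp_sub_mul (φ : SchwartzMap ℝ ℂ) {G : ℝ → ℂ}
    (hGc : Continuous G) {A : ℝ} (hG : ∀ x, ‖G x‖ ≤ A * (1 + |x|)) (s : ℝ) :
    HasDerivAt (fun s => ∫ x, φ (s - x) * G x) (∫ x, deriv φ (s - x) * G x) s := by
  have hmeas : ∀ (ψ : SchwartzMap ℝ ℂ) (s' : ℝ),
      AEStronglyMeasurable (fun x => ψ (s' - x) * G x) := fun ψ s' =>
    ((ψ.continuous.comp (continuous_const.sub continuous_id)).mul hGc).aestronglyMeasurable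
  obtain ⟨b, hb_int, hb⟩ := φ.exists_integrable_bound_comp_sub_mul hG s
  obtain ⟨b', hb'_int, hb'⟩ := (derivCLM ℝ ℂ φ).exists_integrable_bound_comp_sub_mul hG s
  exact (hasDerivAt_integral_of_dominated_loc_of_deriv_le (Metric.ball_mem_nhds s one_pos)
    (Filter.Eventually.of_forall (hmeas φ))
    (hb_int.mono' (hmeas φ s) (ae_of_all _ (hb s (Metric.mem_ball_self one_pos))))
    (hmeas (derivCLM ℝ ℂ φ) s) (ae_of_all _ fun x s' hs' => hb' s' hs' x) hb'_int
    (ae_of_all _ fun x s' _ => ((φ.hasDerivAt (s' - x)).comp_sub_const s' x).mul_const (G x))).2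

/-- If `φ` is Schwartz, `f` is `1`-Lipschitz, and `τ ↦ φ(τ) e^{-2πiaτ}` has zero integral,
then `g = φ ∗ (e^{2πia·} f)` is Lipschitz with constant depending only on `φ`. -/
theorem stmt2 (φ : SchwartzMap ℝ ℂ) :
    ∃ C : ℝ, ∀ (f : ℝ → ℂ) (a : ℝ),
      (∀ s t : ℝ, ‖f s - f t‖ ≤ |s - t|) →
      (∫ τ : ℝ, φ τ * Complex.exp (-(2 * π * Complex.I * a * τ))) = 0 →
      ∀ s t : ℝ,
        ‖(∫ x : ℝ, φ (s - x) * Complex.exp (2 * π * Complex.I * a * x) * f x) -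
            ∫ x : ℝ, φ (t - x) * Complex.exp (2 * π * Complex.I * a * x) * f x‖ ≤
          C * |s - t| := by
  refine ⟨∫ y, |y| * ‖deriv φ y‖, fun f a hf hφa s t => ?_⟩
  have hfL : LipschitzWith 1 f :=
    LipschitzWith.of_dist_le_mul fun x y => by simpa [dist_eq_norm] using hf x y
  have hφ'a : 𝓕 (deriv φ) a = 0 :=
    φ.fourier_deriv_eq_zero (by rwa [fourier_eq_integral_mul_exp])
  have hG : ∀ x : ℝ,
      ‖Complex.exp (2 * π * Complex.I * a * x) * f x‖ ≤ (‖f 0‖ + 1) * (1 + |x|) := fun x => by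
    have h := (norm_sub_norm_le (f x) (f 0)).trans (hf x 0)
    rw [sub_zero] at h
    rw [norm_mul, norm_exp_two_pi_I_mul, one_mul]
    nlinarith [abs_nonneg x, norm_nonneg (f 0)]
  have hderiv : ∀ u, HasDerivAt
      (fun u => ∫ x, φ (u - x) * Complex.exp (2 * π * Complex.I * a * x) * f x)
      (∫ x, deriv φ (u - x) * Complex.exp (2 * π * Complex.I * a * x) * f x) u := fun u => by
    simpa only [mul_assoc] using φ.hasDerivAt_integral_comp_sub_mul
      (G := fun x => Complex.exp (2 * π * Complex.I * a * x) * f x)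
      ((by fun_prop : Continuous fun x : ℝ => Complex.exp (2 * π * Complex.I * a * x)).mul
        hfL.continuous) hG u
  have hbound : ∀ u,
      ‖∫ x, deriv φ (u - x) * Complex.exp (2 * π * Complex.I * a * x) * f x‖ ≤
        ∫ y, |y| * ‖deriv φ y‖ := fun u => by
    simpa using norm_integral_comp_sub_mul_exp_mul_le (SchwartzMap.derivCLM ℝ ℂ φ).integrable
      (by simpa using (SchwartzMap.derivCLM ℝ ℂ φ).integrable_pow_mul volume 1) hφ'a hfL u
  simpa using convex_univ.norm_image_sub_le_of_norm_hasDerivWithin_le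
    (fun u _ => (hderiv u).hasDerivWithinAt) (fun u _ => hbound u)
    (Set.mem_univ t) (Set.mem_univ s)
end

section
/- Let φ : ℝ → ℂ be a Schwartz function with |φ(τ)| ≤ C₀/(1+|τ|) and |φ'(τ)| ≤ C₀/(1+|τ|^3) for all τ. Let f be 1-Lipschitz, let a ∈ ℝ, and suppose for fixed s, t ∈ ℝ that ∫_ℝ (φ(s-x) - φ(t-x)) e^{2πi a x} dx = 0. Then |∫_ℝ (φ(s-x) - φ(t-x)) e^{2πi a x} (f(x) - f(t)) dx| ≤ C |s - t|, where C depends only on C₀ and ∫_ℝ |φ|. -/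
/-! Bound the integrand pointwise. Where `|x - t| ≤ 2|s - t|`, the Lipschitz factor is at most
`2|s - t|`, leaving `|φ(s - x)| + |φ(t - x)|`, whose integral is `2∫|φ|`. Elsewhere every point of
the segment from `t - x` to `s - x` has modulus at least `|x - t|/2`, so the mean value theorem and
the cubic decay of `φ'` give `|φ(s - x) - φ(t - x)| |x - t| ≤ 16 C₀ |s - t| / (1 + (x - t)²)`,
which integrates to `16 π C₀ |s - t|`. -/

open Real MeasureTheory

lemma abs_half_le_of_mem_segment {p q u : ℝ} (hpq : 2 * |q - p| ≤ |p|)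
    (hu : u ∈ segment ℝ p q) : |p| / 2 ≤ |u| := by
  rw [segment_eq_image'] at hu
  obtain ⟨θ, ⟨hθ0, hθ1⟩, rfl⟩ := hu
  have hstep : |θ • (q - p)| ≤ |q - p| := by
    rw [smul_eq_mul, abs_mul, abs_of_nonneg hθ0]
    exact mul_le_of_le_one_left (abs_nonneg _) hθ1
  have htri := abs_add_le (p + θ • (q - p)) (-(θ • (q - p)))
  rw [add_neg_cancel_right, abs_neg] at htri
  dsimp only
  linarith

section CubicDecay

variable {E : Type*} [NormedAddCommGroup E] [NormedSpace ℝ E] {g : ℝ → E} {C₀ : ℝ}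

lemma nonneg_of_norm_deriv_le (hg' : ∀ u, ‖deriv g u‖ ≤ C₀ / (1 + |u| ^ 3)) : 0 ≤ C₀ := by
  simpa using (norm_nonneg _).trans (hg' 0)

lemma norm_sub_le_of_norm_deriv_le (hg : Differentiable ℝ g)
    (hg' : ∀ u, ‖deriv g u‖ ≤ C₀ / (1 + |u| ^ 3)) {p q : ℝ} (hpq : 2 * |q - p| ≤ |p|) :
    ‖g q - g p‖ ≤ C₀ / (1 + (|p| / 2) ^ 3) * |q - p| := by
  have hC₀ := nonneg_of_norm_deriv_le hg'
  have hderiv : ∀ u ∈ segment ℝ p q, ‖deriv g u‖ ≤ C₀ / (1 + (|p| / 2) ^ 3) := by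
    intro u hu
    refine (hg' u).trans (div_le_div_of_nonneg_left hC₀ (by positivity) ?_)
    gcongr
    exact abs_half_le_of_mem_segment hpq hu
  simpa only [Real.norm_eq_abs] using (convex_segment p q).norm_image_sub_le_of_norm_deriv_le
    (fun u _ => hg u) hderiv (left_mem_segment ℝ p q) (right_mem_segment ℝ p q)

lemma div_one_add_half_cube_mul_le (hC₀ : 0 ≤ C₀) {y : ℝ} (hy : 0 ≤ y) :
    C₀ / (1 + (y / 2) ^ 3) * y ≤ 16 * C₀ * (1 + y ^ 2)⁻¹ := by
  rw [div_mul_eq_mul_div, ← div_eq_mul_inv, div_le_div_iff₀ (by positivity) (by positivity)]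
  nlinarith [mul_nonneg hC₀ (sq_nonneg (y - 1)), mul_nonneg (mul_nonneg hC₀ hy) (sq_nonneg y),
    mul_nonneg hC₀ hy]

lemma norm_sub_translate_mul_le (hg : Differentiable ℝ g)
    (hg' : ∀ u, ‖deriv g u‖ ≤ C₀ / (1 + |u| ^ 3)) {s t x L : ℝ} (hL0 : 0 ≤ L) (hL : L ≤ |x - t|) :
    ‖g (s - x) - g (t - x)‖ * L ≤
      |s - t| * (2 * (‖g (s - x)‖ + ‖g (t - x)‖) + 16 * C₀ * (1 + (x - t) ^ 2)⁻¹) := by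
  have hC₀ := nonneg_of_norm_deriv_le hg'
  rcases le_or_gt |x - t| (2 * |s - t|) with hnear | hfar
  · calc ‖g (s - x) - g (t - x)‖ * L
        ≤ (‖g (s - x)‖ + ‖g (t - x)‖) * (2 * |s - t|) :=
          mul_le_mul (norm_sub_le _ _) (hL.trans hnear) hL0 (by positivity)
      _ = |s - t| * (2 * (‖g (s - x)‖ + ‖g (t - x)‖)) := by ring
      _ ≤ _ := by gcongr; exact le_add_of_nonneg_right (by positivity)
  · have hst : s - x - (t - x) = s - t := by ring
    have hmvt := norm_sub_le_of_norm_deriv_le hg hg' (p := t - x) (q := s - x)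
      (by rw [hst, abs_sub_comm t x]; linarith)
    rw [hst, abs_sub_comm t x] at hmvt
    have hdecay := div_one_add_half_cube_mul_le hC₀ (abs_nonneg (x - t))
    rw [sq_abs] at hdecay
    calc ‖g (s - x) - g (t - x)‖ * L
        ≤ C₀ / (1 + (|x - t| / 2) ^ 3) * |s - t| * |x - t| :=
          mul_le_mul hmvt hL hL0 (by positivity)
      _ = |s - t| * (C₀ / (1 + (|x - t| / 2) ^ 3) * |x - t|) := by ring
      _ ≤ |s - t| * (16 * C₀ * (1 + (x - t) ^ 2)⁻¹) := by gcongr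
      _ ≤ _ := by gcongr; exact le_add_of_nonneg_left (by positivity)

end CubicDecay

theorem norm_integral_sub_translate_mul_le {φ : ℝ → ℂ} (hφ : Differentiable ℝ φ)
    (hφi : Integrable φ) {C₀ : ℝ} (hφ' : ∀ u, ‖deriv φ u‖ ≤ C₀ / (1 + |u| ^ 3)) {e f : ℝ → ℂ}
    {s t : ℝ} (he : ∀ x, ‖e x‖ ≤ 1) (hf : ∀ x, ‖f x - f t‖ ≤ |x - t|) :
    ‖∫ x, (φ (s - x) - φ (t - x)) * e x * (f x - f t)‖ ≤
      (4 * (∫ τ, ‖φ τ‖) + 16 * π * C₀) * |s - t| := by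
  set bound : ℝ → ℝ := fun x =>
    |s - t| * (2 * (‖φ (s - x)‖ + ‖φ (t - x)‖) + 16 * C₀ * (1 + (x - t) ^ 2)⁻¹)
  have hnorm_s : Integrable fun x => ‖φ (s - x)‖ := hφi.norm.comp_sub_left s
  have hnorm_t : Integrable fun x => ‖φ (t - x)‖ := hφi.norm.comp_sub_left t
  have hcauchy : Integrable fun x : ℝ => (1 + (x - t) ^ 2)⁻¹ :=
    integrable_inv_one_add_sq.comp_sub_right t
  have hbound_int : Integrable bound :=
    (((hnorm_s.add hnorm_t).const_mul 2).add (hcauchy.const_mul (16 * C₀))).const_mul |s - t|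
  have hbound_eq : ∫ x, bound x = (4 * (∫ τ, ‖φ τ‖) + 16 * π * C₀) * |s - t| := by
    simp only [bound]
    rw [integral_const_mul, integral_add, integral_const_mul, integral_const_mul,
      integral_add hnorm_s hnorm_t, integral_sub_left_eq_self (fun τ => ‖φ τ‖),
      integral_sub_left_eq_self (fun τ => ‖φ τ‖),
      integral_sub_right_eq_self (fun x : ℝ => (1 + x ^ 2)⁻¹), integral_univ_inv_one_add_sq]
    · ring
    · exact (hnorm_s.add hnorm_t).const_mul 2
    · exact hcauchy.const_mul _
  have hpointwise : ∀ x, ‖(φ (s - x) - φ (t - x)) * e x * (f x - f t)‖ ≤ bound x := by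
    intro x
    rw [norm_mul, norm_mul]
    calc _ ≤ ‖φ (s - x) - φ (t - x)‖ * ‖f x - f t‖ := by
          gcongr; exact mul_le_of_le_one_right (norm_nonneg _) (he x)
      _ ≤ bound x := norm_sub_translate_mul_le hφ hφ' (norm_nonneg _) (hf x)
  calc _ ≤ ∫ x, ‖(φ (s - x) - φ (t - x)) * e x * (f x - f t)‖ :=
        norm_integral_le_integral_norm _
    _ ≤ ∫ x, bound x := integral_mono_of_nonneg (ae_of_all _ fun _ => norm_nonneg _)
        hbound_int (ae_of_all _ hpointwise)
    _ = _ := hbound_eq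

/-- Quantitative Lipschitz bound: if `|φ(τ)| ≤ C₀/(1+|τ|)`, `|φ'(τ)| ≤ C₀/(1+|τ|³)`,
`f` is 1-Lipschitz, and `∫ (φ(s-x)-φ(t-x)) e^{2πiax} dx = 0`, then
`|∫ (φ(s-x)-φ(t-x)) e^{2πiax} (f(x)-f(t)) dx| ≤ C |s-t|` with `C` depending only
on `C₀` and `∫|φ|`. -/
theorem stmt3 (C₀ M : ℝ) :
    ∃ C : ℝ, ∀ (φ : SchwartzMap ℝ ℂ) (f : ℝ → ℂ) (a s t : ℝ),
      (∀ τ : ℝ, ‖φ τ‖ ≤ C₀ / (1 + |τ|)) →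
      (∀ τ : ℝ, ‖deriv (⇑φ) τ‖ ≤ C₀ / (1 + |τ| ^ 3)) →
      (∀ u v : ℝ, ‖f u - f v‖ ≤ |u - v|) →
      (∫ τ : ℝ, ‖φ τ‖) ≤ M →
      (∫ x : ℝ, (φ (s - x) - φ (t - x)) * Complex.exp (2 * π * Complex.I * a * x)) = 0 →
      ‖∫ x : ℝ, (φ (s - x) - φ (t - x)) * Complex.exp (2 * π * Complex.I * a * x) *
          (f x - f t)‖ ≤ C * |s - t| := by
  refine ⟨4 * M + 16 * π * C₀, fun φ f a s t _ hφ' hf hM _ => ?_⟩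
  have hexp (x : ℝ) : ‖Complex.exp (2 * π * Complex.I * a * x)‖ ≤ 1 := by
    rw [Complex.norm_exp]
    simp
  calc _ ≤ (4 * (∫ τ, ‖φ τ‖) + 16 * π * C₀) * |s - t| :=
        norm_integral_sub_translate_mul_le φ.differentiable φ.integrable hφ' hexp (hf · t)
    _ ≤ (4 * M + 16 * π * C₀) * |s - t| := by gcongr ?_ * _; linarith
end

section
/- Let i ∈ ℕ, n ∈ ℕ, and let Q ⊂ Q₁ be two cubes in ℝⁿ. Then for every polynomial p of degree strictly less than i (in n variables), sup_{x ∈ Q₁} |p(x)| ≤ C (|Q₁|/|Q|)^{i/n} (|Q|^{-1} ∫_Q |p|²)^{1/2}, where C depends only on i and n. -/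
/-!
On the finite-dimensional space of polynomials with exponents in a fixed finite set, the
`ℓ¹` norm of the coefficients and the `L²` norm on the unit cube are both continuous and
absolutely homogeneous, and the latter vanishes only at `0` (a polynomial vanishing on an
open box is zero); compactness of the unit sphere therefore bounds the first by a multiple
of the second. After the affine change of variables sending `Q` to the unit cube, a point
of `Q₁` has coordinates of size at most `t = L₁ / L ≥ 1`, where a polynomial of degree `< i`
is bounded by its coefficient `ℓ¹` norm times `t ^ i = (|Q₁| / |Q|) ^ (i / n)`.
-/

open MeasureTheory

/-- An axis-parallel cube in `ℝⁿ` with lower corner `c` and side length `L`. -/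
def cube (n : ℕ) (c : Fin n → ℝ) (L : ℝ) : Set (Fin n → ℝ) :=
  Set.univ.pi fun d => Set.Icc (c d) (c d + L)

open scoped Pointwise

theorem exists_le_mul_of_continuous_of_abs_homogeneous {E : Type*} [NormedAddCommGroup E]
    [NormedSpace ℝ E] [FiniteDimensional ℝ E] {M N : E → ℝ} (hM : Continuous M)
    (hN : Continuous N) (hM_smul : ∀ (r : ℝ) a, M (r • a) = |r| * M a)
    (hN_smul : ∀ (r : ℝ) a, N (r • a) = |r| * N a) (hN_pos : ∀ a, a ≠ 0 → 0 < N a) :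
    ∃ C, ∀ a, M a ≤ C * N a := by
  have hS : IsCompact (Metric.sphere (0 : E) 1) := isCompact_sphere 0 1
  have hN_ne : ∀ u ∈ Metric.sphere (0 : E) 1, N u ≠ 0 := fun u hu =>
    (hN_pos u (ne_zero_of_mem_unit_sphere ⟨u, hu⟩)).ne'
  obtain ⟨B, hB⟩ := hS.exists_bound_of_continuousOn hM.continuousOn
  obtain ⟨B', hB'⟩ := hS.exists_bound_of_continuousOn (hN.continuousOn.inv₀ hN_ne)
  refine ⟨B * B', fun a => ?_⟩
  rcases eq_or_ne a 0 with rfl | ha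
  · have hM0 : M 0 = 0 := by simpa using hM_smul 0 0
    have hN0 : N 0 = 0 := by simpa using hN_smul 0 0
    simp [hM0, hN0]
  set u := ‖a‖⁻¹ • a
  have hu : u ∈ Metric.sphere (0 : E) 1 := by simp [u, norm_smul, ha]
  have hMu : M u ≤ B := (le_abs_self _).trans (hB u hu)
  have hNu : 1 ≤ B' * N u := calc
    1 = (N u)⁻¹ * N u := (inv_mul_cancel₀ (hN_ne u hu)).symm
    _ ≤ B' * N u := by
      gcongr
      · exact (hN_pos u (ne_zero_of_mem_unit_sphere ⟨u, hu⟩)).le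
      · exact (le_abs_self _).trans (hB' u hu)
  have ha_eq : a = ‖a‖ • u := by simp [u, smul_smul, ha]
  rw [ha_eq, hM_smul, hN_smul, abs_norm]
  have hB0 : 0 ≤ B := (abs_nonneg _).trans (hB u hu)
  calc ‖a‖ * M u ≤ ‖a‖ * (B * (B' * N u)) := by
        gcongr; exact hMu.trans (le_mul_of_one_le_right hB0 hNu)
    _ = B * B' * (‖a‖ * N u) := by ring

theorem mem_cube {n : ℕ} {c x : Fin n → ℝ} {L : ℝ} :
    x ∈ cube n c L ↔ ∀ d, c d ≤ x d ∧ x d ≤ c d + L := by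
  simp only [cube, Set.mem_pi, Set.mem_univ, true_implies, Set.mem_Icc]

theorem isCompact_cube (n : ℕ) (c : Fin n → ℝ) (L : ℝ) : IsCompact (cube n c L) :=
  isCompact_univ_pi fun _ => isCompact_Icc

theorem abs_sub_le_of_cube_subset_cube {n : ℕ} {c c₁ x : Fin n → ℝ} {L L₁ : ℝ} (hL : 0 ≤ L)
    (h : cube n c L ⊆ cube n c₁ L₁) (hx : x ∈ cube n c₁ L₁) (d : Fin n) :
    |x d - c d| ≤ L₁ := by
  have hc := mem_cube.1 (h (mem_cube.2 fun d => ⟨le_rfl, le_add_of_nonneg_right hL⟩)) d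
  have hx := mem_cube.1 hx d
  rw [abs_le]; constructor <;> linarith

theorem le_of_cube_subset_cube {n : ℕ} (hn : 0 < n) {c c₁ : Fin n → ℝ} {L L₁ : ℝ} (hL : 0 ≤ L)
    (h : cube n c L ⊆ cube n c₁ L₁) : L ≤ L₁ := by
  have hc := mem_cube.1 (h (mem_cube.2 fun d => ⟨le_rfl, le_add_of_nonneg_right hL⟩)) ⟨0, hn⟩
  have hcL := mem_cube.1 (h (mem_cube.2 fun d => ⟨le_add_of_nonneg_right hL, le_rfl⟩))
    ⟨0, hn⟩
  linarith [hc.1, hcL.2]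

theorem setIntegral_cube_comp_affine {n : ℕ} (c : Fin n → ℝ) {L : ℝ} (hL : 0 < L)
    (g : (Fin n → ℝ) → ℝ) :
    ∫ y in cube n 0 1, g (c + L • y) = (L ^ n)⁻¹ * ∫ y in cube n c L, g y := by
  have h_smul : L • cube n 0 1 = cube n 0 L := by
    ext y
    simp only [Set.mem_smul_set_iff_inv_smul_mem₀ hL.ne', mem_cube, Pi.smul_apply,
      smul_eq_mul, Pi.zero_apply, zero_add]
    refine forall_congr' fun d => ?_
    rw [le_inv_mul_iff₀ hL, inv_mul_le_iff₀ hL, mul_zero, mul_one]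
  have h_add : (c + ·) ⁻¹' cube n c L = cube n 0 L := by
    ext y; simp [mem_cube]
  rw [Measure.setIntegral_comp_smul_of_pos volume (fun y => g (c + y)) _ hL, h_smul, ← h_add,
    (measurePreserving_add_left volume c).setIntegral_preimage_emb
      (measurableEmbedding_addLeft c), Module.finrank_fin_fun, smul_eq_mul]

namespace MvPolynomial

variable {σ : Type*}

theorem totalDegree_bind₁_le {τ R : Type*} [CommSemiring R]
    {g : σ → MvPolynomial τ R} (hg : ∀ d, (g d).totalDegree ≤ 1) (p : MvPolynomial σ R) :
    (bind₁ g p).totalDegree ≤ p.totalDegree := by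
  conv_lhs => rw [p.as_sum, map_sum]
  refine (totalDegree_finsetSum _ _).trans (Finset.sup_le fun α hα => ?_)
  rw [bind₁_monomial]
  refine (totalDegree_mul _ _).trans ?_
  rw [totalDegree_C, zero_add]
  refine (totalDegree_finsetProd _ _).trans ((Finset.sum_le_sum fun d _ => ?_).trans
    (le_totalDegree hα))
  calc (g d ^ α d).totalDegree ≤ α d * (g d).totalDegree := totalDegree_pow _ _
    _ ≤ α d := by simpa using Nat.mul_le_mul_left (α d) (hg d)

theorem abs_eval_le (p : MvPolynomial σ ℝ) {x : σ → ℝ} {t : ℝ}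
    (ht : 1 ≤ t) (hx : ∀ d, |x d| ≤ t) :
    |eval x p| ≤ (∑ α ∈ p.support, |coeff α p|) * t ^ p.totalDegree := by
  rw [eval_eq, Finset.sum_mul]
  refine (Finset.abs_sum_le_sum_abs _ _).trans (Finset.sum_le_sum fun α hα => ?_)
  rw [abs_mul, Finset.abs_prod]
  gcongr
  calc ∏ d ∈ α.support, |x d ^ α d| ≤ ∏ d ∈ α.support, t ^ α d :=
        Finset.prod_le_prod (fun _ _ => abs_nonneg _) fun d _ => by
          rw [abs_pow]; exact pow_le_pow_left₀ (abs_nonneg _) (hx d) _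
    _ = t ^ α.sum (fun _ e => e) := Finset.prod_pow_eq_pow_sum _ _ _
    _ ≤ t ^ p.totalDegree := pow_le_pow_right₀ ht (le_totalDegree hα)

theorem integral_sq_eval_cube_pos {n : ℕ} {p : MvPolynomial (Fin n) ℝ} (hp : p ≠ 0)
    (c : Fin n → ℝ) {L : ℝ} (hL : 0 < L) :
    0 < ∫ x in cube n c L, (eval x p) ^ 2 := by
  set U := Set.univ.pi fun d => Set.Ioo (c d) (c d + L)
  obtain ⟨x, hxU, hx⟩ : ∃ x ∈ U, eval x p ≠ 0 := by
    by_contra! h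
    exact hp (funext_set (fun d => Set.Ioo (c d) (c d + L))
      (fun d => Set.Ioo_infinite (by linarith)) fun x hx => by simpa using h x hx)
  have hcont : Continuous fun x => (eval x p) ^ 2 := (continuous_eval p).pow 2
  rw [integral_pos_iff_support_of_nonneg (fun _ => sq_nonneg _)
    (hcont.continuousOn.integrableOn_compact (isCompact_cube n c L)),
    Measure.restrict_apply' (isCompact_cube n c L).measurableSet]
  have hopen : IsOpen (Function.support (fun x => (eval x p) ^ 2) ∩ U) :=
    (isOpen_ne_fun hcont continuous_const).inter
      (isOpen_set_pi Set.finite_univ fun _ _ => isOpen_Ioo)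
  refine (hopen.measure_pos volume ⟨x, by simpa using hx, hxU⟩).trans_le (measure_mono ?_)
  exact Set.inter_subset_inter_right _ (Set.pi_mono fun _ _ => Set.Ioo_subset_Icc_self)

noncomputable def ofCoeffs (s : Finset (σ →₀ ℕ)) (a : s → ℝ) : MvPolynomial σ ℝ :=
  ∑ α : s, monomial α (a α)

theorem coeff_ofCoeffs (s : Finset (σ →₀ ℕ)) (a : s → ℝ) (α : s) :
    coeff α (ofCoeffs s a) = a α := by
  classical
  simp [ofCoeffs, coeff_sum, coeff_monomial]

theorem ofCoeffs_coeff {s : Finset (σ →₀ ℕ)} {p : MvPolynomial σ ℝ} (hp : p.support ⊆ s) :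
    ofCoeffs s (fun α => coeff α p) = p := by
  classical
  ext β
  by_cases hβ : β ∈ s
  · exact coeff_ofCoeffs s _ ⟨β, hβ⟩
  · rw [notMem_support_iff.1 fun h => hβ (hp h)]
    simp only [ofCoeffs, coeff_sum, coeff_monomial]
    exact Finset.sum_eq_zero fun α _ => if_neg fun h : (α : σ →₀ ℕ) = β => hβ (h ▸ α.2)

theorem ofCoeffs_smul (s : Finset (σ →₀ ℕ)) (r : ℝ) (a : s → ℝ) :
    ofCoeffs s (r • a) = r • ofCoeffs s a := by
  simp [ofCoeffs, Finset.smul_sum, smul_monomial]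

theorem eval_ofCoeffs (s : Finset (σ →₀ ℕ)) (a : s → ℝ) (x : σ → ℝ) :
    eval x (ofCoeffs s a) = ∑ α : s, a α * eval x (monomial α 1) := by
  simp [ofCoeffs, eval_monomial]

end MvPolynomial

open MvPolynomial

theorem exists_sum_abs_coeff_le_sqrt_integral {n : ℕ} (s : Finset (Fin n →₀ ℕ)) :
    ∃ C, ∀ p : MvPolynomial (Fin n) ℝ, p.support ⊆ s →
      ∑ α ∈ p.support, |coeff α p| ≤ C * √(∫ x in cube n 0 1, (eval x p) ^ 2) := by
  set N : (s → ℝ) → ℝ := fun a => √(∫ x in cube n 0 1, (eval x (ofCoeffs s a)) ^ 2)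
  have hN : Continuous N := by
    refine Real.continuous_sqrt.comp
      (continuous_parametric_integral_of_continuous ?_ (isCompact_cube n 0 1))
    simp only [eval_ofCoeffs]
    have := fun α : s => continuous_eval (monomial (α : Fin n →₀ ℕ) (1 : ℝ))
    fun_prop
  have hN_smul : ∀ (r : ℝ) a, N (r • a) = |r| * N a := by
    intro r a
    simp only [N, ofCoeffs_smul, smul_eval, mul_pow, integral_const_mul]
    rw [Real.sqrt_mul (sq_nonneg r), Real.sqrt_sq_eq_abs]
  have hN_pos : ∀ a, a ≠ 0 → 0 < N a := by
    intro a ha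
    have hpoly : ofCoeffs s a ≠ 0 := by
      obtain ⟨α, hα⟩ := Function.ne_iff.1 ha
      exact ne_of_apply_ne (coeff α) (by rw [coeff_ofCoeffs]; exact hα)
    exact Real.sqrt_pos.2 (integral_sq_eval_cube_pos hpoly 0 one_pos)
  obtain ⟨C, hC⟩ := exists_le_mul_of_continuous_of_abs_homogeneous (M := fun a => ∑ α, |a α|)
    (by fun_prop) hN (fun r a => by simp [abs_mul, Finset.mul_sum]) hN_smul hN_pos
  refine ⟨C, fun p hp => ?_⟩
  calc ∑ α ∈ p.support, |coeff α p| ≤ ∑ α ∈ s, |coeff α p| :=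
        Finset.sum_le_sum_of_subset_of_nonneg hp fun _ _ _ => abs_nonneg _
    _ = ∑ α : s, |coeff α p| := (Finset.sum_coe_sort s _).symm
    _ ≤ C * N (fun α => coeff α p) := hC _
    _ = C * √(∫ x in cube n 0 1, (eval x p) ^ 2) := by simp only [N, ofCoeffs_coeff hp]

theorem exists_abs_eval_le_mul_sqrt_integral_unit_cube (n i : ℕ) :
    ∃ C, ∀ p : MvPolynomial (Fin n) ℝ, p.totalDegree < i → ∀ t : ℝ, 1 ≤ t →
      ∀ x : Fin n → ℝ, (∀ d, |x d| ≤ t) →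
        |eval x p| ≤ C * t ^ i * √(∫ y in cube n 0 1, (eval y p) ^ 2) := by
  obtain ⟨C, hC⟩ := exists_sum_abs_coeff_le_sqrt_integral
    (Finset.Iic (Finsupp.equivFunOnFinite.symm fun _ : Fin n => i))
  refine ⟨C, fun p hp t ht x hx => ?_⟩
  have hsupp : p.support ⊆ Finset.Iic (Finsupp.equivFunOnFinite.symm fun _ => i) :=
    fun α hα => Finset.mem_Iic.2 <| Finsupp.le_def.2 fun d =>
      ((monomial_le_degreeOf d hα).trans (degreeOf_le_totalDegree p d)).trans hp.le
  calc |eval x p| ≤ (∑ α ∈ p.support, |coeff α p|) * t ^ p.totalDegree := p.abs_eval_le ht hx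
    _ ≤ (∑ α ∈ p.support, |coeff α p|) * t ^ i := by gcongr
    _ ≤ C * √(∫ y in cube n 0 1, (eval y p) ^ 2) * t ^ i := by
        gcongr
        exact hC p hsupp
    _ = C * t ^ i * √(∫ y in cube n 0 1, (eval y p) ^ 2) := by ring

theorem stmt4_general (n i : ℕ) (hn : 0 < n) :
    ∃ C : ℝ, ∀ (c c₁ : Fin n → ℝ) (L L₁ : ℝ), 0 < L → 0 < L₁ →
      cube n c L ⊆ cube n c₁ L₁ →
      ∀ p : MvPolynomial (Fin n) ℝ, p.totalDegree < i →
      ∀ x ∈ cube n c₁ L₁,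
        |MvPolynomial.eval x p| ≤
          C * (L₁ ^ n / L ^ n) ^ ((i : ℝ) / n) *
            Real.sqrt ((L ^ n)⁻¹ * ∫ y in cube n c L, (MvPolynomial.eval y p) ^ 2) := by
  obtain ⟨K, hK⟩ := exists_abs_eval_le_mul_sqrt_integral_unit_cube n i
  refine ⟨K, fun c c₁ L L₁ hL _ hsub p hp x hx => ?_⟩
  set q := bind₁ (fun d => C (c d) + C L * X d) p
  have hq : ∀ y, eval y q = eval (c + L • y) p := fun y => by
    rw [eval, eval₂Hom_bind₁]
    exact congrArg (eval · p) (funext fun d => by simp)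
  have h_affine : ∀ d, (C (c d) + C L * X d : MvPolynomial (Fin n) ℝ).totalDegree ≤ 1 :=
    fun d => (totalDegree_add _ _).trans (max_le (by simp) ((totalDegree_mul _ _).trans (by simp)))
  have hq_deg : q.totalDegree < i := (totalDegree_bind₁_le h_affine p).trans_lt hp
  set t := L₁ / L
  have ht : 1 ≤ t := (one_le_div hL).2 (le_of_cube_subset_cube hn hL.le hsub)
  set x' : Fin n → ℝ := fun d => (x d - c d) / L
  have hx' : ∀ d, |x' d| ≤ t := fun d => by
    rw [abs_div, abs_of_pos hL]
    exact div_le_div_of_nonneg_right (abs_sub_le_of_cube_subset_cube hL.le hsub hx d) hL.le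
  have hx_eq : c + L • x' = x := by
    ext d
    simp only [x', Pi.add_apply, Pi.smul_apply, smul_eq_mul, mul_div_cancel₀ _ hL.ne']
    ring
  have hpow : (L₁ ^ n / L ^ n) ^ ((i : ℝ) / n) = t ^ i := by
    rw [← div_pow, ← Real.rpow_natCast, ← Real.rpow_mul (by positivity),
      mul_div_cancel₀ _ (by exact_mod_cast hn.ne'), Real.rpow_natCast]
  calc |eval x p| = |eval x' q| := by rw [hq, hx_eq]
    _ ≤ K * t ^ i * √(∫ y in cube n 0 1, (eval y q) ^ 2) := hK q hq_deg t ht x' hx'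
    _ = _ := by
        simp only [hq, hpow, setIntegral_cube_comp_affine c hL fun y => (eval y p) ^ 2]

/-- Polynomial growth lemma: for cubes `Q ⊆ Q₁` in `ℝⁿ` and a polynomial `p` of total
degree `< i`, `sup_{Q₁} |p| ≤ C (|Q₁|/|Q|)^{i/n} (|Q|⁻¹ ∫_Q |p|²)^{1/2}` with `C = C(i,n)`. -/
theorem stmt4 (n i : ℕ) (hn : 0 < n) (hi : 0 < i) :
    ∃ C : ℝ, ∀ (c c₁ : Fin n → ℝ) (L L₁ : ℝ), 0 < L → 0 < L₁ →
      cube n c L ⊆ cube n c₁ L₁ →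
      ∀ p : MvPolynomial (Fin n) ℝ, p.totalDegree < i →
      ∀ x ∈ cube n c₁ L₁,
        |MvPolynomial.eval x p| ≤
          C * (L₁ ^ n / L ^ n) ^ ((i : ℝ) / n) *
            Real.sqrt ((L ^ n)⁻¹ * ∫ y in cube n c L, (MvPolynomial.eval y p) ^ 2) :=
  stmt4_general n i hn
end

section
/- Let i ∈ ℕ and let p be a polynomial on ℝ of degree strictly less than i. For any interval I and any σ ≥ 0, sup_{x ∈ 2^{σ}I} |p(x)| ≤ C · 2^{σ(i-1)} · (|I|^{-1} ∫_I |p|²)^{1/2}, where C depends only on i and 2^{σ}I denotes the interval concentric with I of length 2^{σ}|I|. -/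
/-!
An affine change of variables reduces the claim to `I = [-1, 1]`. On the finite-dimensional space
of coefficient vectors `a` of polynomials of degree `< i`, the function
`a ↦ ∫_{-1}^{1} (∑ aₖ tᵏ)² dt` is continuous, homogeneous of degree two and positive off `0`, so by
compactness of the unit sphere it dominates `‖a‖²` up to a constant. For `|t| ≤ 2^σ` every monomial
`tᵏ` with `k < i` is at most `2^{σ(i-1)}` in absolute value, and `|p(t)| ≤ i ‖a‖ 2^{σ(i-1)}`
follows.
-/

open MeasureTheory Polynomial

theorem exists_norm_le_mul_sqrt_of_homogeneous {E : Type*} [NormedAddCommGroup E]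
    [NormedSpace ℝ E] [FiniteDimensional ℝ E] {F : E → ℝ} (hF : Continuous F)
    (hsmul : ∀ (c : ℝ) (a : E), F (c • a) = c ^ 2 * F a) (hpos : ∀ a, a ≠ 0 → 0 < F a) :
    ∃ c : ℝ, ∀ a, ‖a‖ ≤ c * √(F a) := by
  have hF0 : F 0 = 0 := by simpa using hsmul 0 0
  have hunit : ∀ a : E, a ≠ 0 → ‖a‖⁻¹ • a ∈ Metric.sphere (0 : E) 1 := fun a ha => by
    simp [norm_smul, inv_mul_cancel₀ (norm_ne_zero_iff.mpr ha)]
  rcases (Metric.sphere (0 : E) 1).eq_empty_or_nonempty with hS | hS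
  · refine ⟨0, fun a => ?_⟩
    rcases eq_or_ne a 0 with rfl | ha
    · simp
    · simpa [hS] using hunit a ha
  obtain ⟨u, hu, hmin⟩ := (isCompact_sphere (0 : E) 1).exists_isMinOn hS hF.continuousOn
  have hm : 0 < F u := hpos u (ne_zero_of_mem_unit_sphere ⟨u, hu⟩)
  refine ⟨(√(F u))⁻¹, fun a => ?_⟩
  rcases eq_or_ne a 0 with rfl | ha
  · simp [hF0]
  have hFa : ‖a‖ ^ 2 * F u ≤ F a := by
    have h : F u ≤ F (‖a‖⁻¹ • a) := hmin (hunit a ha)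
    rwa [hsmul, inv_pow, le_inv_mul_iff₀ (by positivity)] at h
  rw [le_inv_mul_iff₀ (by positivity), mul_comm, ← Real.sqrt_sq (norm_nonneg a),
    ← Real.sqrt_mul (sq_nonneg _)]
  exact Real.sqrt_le_sqrt hFa

theorem abs_sum_mul_pow_le {n : ℕ} (a : Fin n → ℝ) {R t : ℝ} (hR : 1 ≤ R) (ht : |t| ≤ R) :
    |∑ k, a k * t ^ (k : ℕ)| ≤ n * ‖a‖ * R ^ ((n : ℝ) - 1) := by
  have hpow : ∀ k : Fin n, |t| ^ (k : ℕ) ≤ R ^ ((n : ℝ) - 1) := fun k => by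
    have hk : (k : ℝ) + 1 ≤ n := by exact_mod_cast k.isLt
    calc |t| ^ (k : ℕ) ≤ R ^ (k : ℕ) := pow_le_pow_left₀ (abs_nonneg t) ht k
      _ = R ^ ((k : ℕ) : ℝ) := (Real.rpow_natCast R k).symm
      _ ≤ R ^ ((n : ℝ) - 1) := Real.rpow_le_rpow_of_exponent_le hR (by linarith)
  calc |∑ k, a k * t ^ (k : ℕ)| ≤ ∑ k, |a k| * |t| ^ (k : ℕ) := by
        simpa only [abs_mul, abs_pow] using
          Finset.abs_sum_le_sum_abs (fun k : Fin n => a k * t ^ (k : ℕ)) _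
    _ ≤ ∑ _k : Fin n, ‖a‖ * R ^ ((n : ℝ) - 1) := Finset.sum_le_sum fun k _ =>
        mul_le_mul (norm_le_pi_norm a k) (hpow k) (by positivity) (norm_nonneg a)
    _ = n * ‖a‖ * R ^ ((n : ℝ) - 1) := by simp [mul_assoc]

namespace Polynomial

theorem integral_sq_eval_pos {q : ℝ[X]} (hq : q ≠ 0) {a b : ℝ} (hab : a < b) :
    0 < ∫ t in a..b, q.eval t ^ 2 := by
  have hcont : Continuous fun t => q.eval t ^ 2 := by fun_prop
  rw [intervalIntegral.integral_pos_iff_support_of_nonneg_ae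
    (.of_forall fun t => sq_nonneg _) (hcont.intervalIntegrable a b)]
  refine ⟨hab, (IsOpen.measure_pos volume (hcont.isOpen_support.inter isOpen_Ioo) ?_).trans_le
    (measure_mono (Set.inter_subset_inter_right _ Set.Ioo_subset_Ioc_self))⟩
  obtain ⟨t, ht, hroot⟩ := ((Set.Ioo_infinite hab).sdiff (q.finite_setOfPred_isRoot hq)).nonempty
  exact ⟨t, pow_ne_zero 2 hroot, ht⟩

theorem comp_affine_mem_degreeLT {R : Type*} [Semiring R] {n : ℕ} {p : R[X]}
    (hp : p ∈ degreeLT R n) (a b : R) : p.comp (C a * X + C b) ∈ degreeLT R n := by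
  rcases eq_or_ne p 0 with rfl | hp0
  · simp
  rw [mem_degreeLT] at hp ⊢
  have hnat : (p.comp (C a * X + C b)).natDegree < n := calc
    _ ≤ p.natDegree * (C a * X + C b).natDegree := natDegree_comp_le
    _ ≤ p.natDegree * 1 := Nat.mul_le_mul_left _ natDegree_linear_le
    _ < n := by simpa using (natDegree_lt_iff_degree_lt hp0).mpr hp
  exact degree_le_natDegree.trans_lt (by exact_mod_cast hnat)

theorem integral_sq_eval_comp_affine (p : ℝ[X]) {ρ : ℝ} (hρ : ρ ≠ 0) (x₀ : ℝ) :
    ∫ t in (-1 : ℝ)..1, (p.comp (C ρ * X + C x₀)).eval t ^ 2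
      = ρ⁻¹ * ∫ y in (x₀ - ρ)..(x₀ + ρ), p.eval y ^ 2 := by
  simp only [eval_comp, eval_add, eval_mul, eval_C, eval_X]
  rw [intervalIntegral.integral_comp_mul_add (fun y => p.eval y ^ 2) hρ, smul_eq_mul]
  ring_nf

end Polynomial

noncomputable def coeffSqIntegral (n : ℕ) (a : Fin n → ℝ) : ℝ :=
  ∫ t in (-1 : ℝ)..1, (∑ k, a k * t ^ (k : ℕ)) ^ 2

theorem continuous_coeffSqIntegral (n : ℕ) : Continuous (coeffSqIntegral n) :=
  intervalIntegral.continuous_parametric_intervalIntegral_of_continuous' (by fun_prop) _ _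

theorem coeffSqIntegral_smul (n : ℕ) (c : ℝ) (a : Fin n → ℝ) :
    coeffSqIntegral n (c • a) = c ^ 2 * coeffSqIntegral n a := by
  simp only [coeffSqIntegral, Pi.smul_apply, smul_eq_mul, mul_assoc, ← Finset.mul_sum, mul_pow]
  exact intervalIntegral.integral_const_mul _ _

theorem coeffSqIntegral_pos {n : ℕ} {a : Fin n → ℝ} (ha : a ≠ 0) : 0 < coeffSqIntegral n a := by
  set q := (degreeLTEquiv ℝ n).symm a
  have hq : (q : ℝ[X]) ≠ 0 := by simpa [q] using ha
  have := integral_sq_eval_pos hq (by norm_num : (-1 : ℝ) < 1)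
  simpa [coeffSqIntegral, eval_eq_sum_degreeLTEquiv q.2, q] using this

theorem exists_abs_eval_le_mul_sqrt_integral_sq (n : ℕ) :
    ∃ c : ℝ, ∀ q ∈ degreeLT ℝ n, ∀ R, 1 ≤ R → ∀ t, |t| ≤ R →
      |q.eval t| ≤ c * R ^ ((n : ℝ) - 1) * √(∫ s in (-1 : ℝ)..1, q.eval s ^ 2) := by
  obtain ⟨c, hc⟩ := exists_norm_le_mul_sqrt_of_homogeneous (continuous_coeffSqIntegral n)
    (coeffSqIntegral_smul n) fun _ => coeffSqIntegral_pos
  refine ⟨n * c, fun q hq R hR t ht => ?_⟩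
  set a := degreeLTEquiv ℝ n ⟨q, hq⟩
  have heval : ∀ s, q.eval s = ∑ k, a k * s ^ (k : ℕ) := eval_eq_sum_degreeLTEquiv hq
  have hint : ∫ s in (-1 : ℝ)..1, q.eval s ^ 2 = coeffSqIntegral n a := by
    simp only [heval, coeffSqIntegral]
  rw [hint, heval]
  calc |∑ k, a k * t ^ (k : ℕ)| ≤ n * ‖a‖ * R ^ ((n : ℝ) - 1) := abs_sum_mul_pow_le a hR ht
    _ ≤ n * (c * √(coeffSqIntegral n a)) * R ^ ((n : ℝ) - 1) := by gcongr; exact hc a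
    _ = n * c * R ^ ((n : ℝ) - 1) * √(coeffSqIntegral n a) := by ring

theorem stmt5_general (i : ℕ) :
    ∃ C : ℝ, ∀ p : Polynomial ℝ, p.degree < (i : WithBot ℕ) →
      ∀ (x₀ ρ : ℝ), 0 < ρ → ∀ σ : ℕ,
      ∀ x ∈ Set.Icc (x₀ - 2 ^ σ * ρ) (x₀ + 2 ^ σ * ρ),
        |p.eval x| ≤ C * 2 ^ ((σ : ℝ) * ((i : ℝ) - 1)) *
          Real.sqrt ((2 * ρ)⁻¹ * ∫ y in Set.Icc (x₀ - ρ) (x₀ + ρ), (p.eval y) ^ 2) := by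
  obtain ⟨c, hc⟩ := exists_abs_eval_le_mul_sqrt_integral_sq i
  refine ⟨c * √2, fun p hp x₀ ρ hρ σ x hx => ?_⟩
  set q := p.comp (C ρ * X + C x₀)
  have hq : q ∈ degreeLT ℝ i := comp_affine_mem_degreeLT (mem_degreeLT.mpr hp) ρ x₀
  set t := (x - x₀) / ρ
  have hpq : p.eval x = q.eval t := by simp [q, t, mul_div_cancel₀ _ hρ.ne']
  have ht : |t| ≤ 2 ^ σ := by
    rw [abs_div, abs_of_pos hρ, div_le_iff₀ hρ, abs_le]
    constructor <;> linarith [hx.1, hx.2]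
  have havg : (2 * ρ)⁻¹ * ∫ y in Set.Icc (x₀ - ρ) (x₀ + ρ), p.eval y ^ 2
      = (∫ s in (-1 : ℝ)..1, q.eval s ^ 2) / 2 := by
    rw [integral_sq_eval_comp_affine p hρ.ne', integral_Icc_eq_integral_Ioc,
      ← intervalIntegral.integral_of_le (by linarith)]
    field_simp
  rw [hpq, havg, Real.rpow_natCast_mul zero_le_two, Real.sqrt_div' _ zero_le_two]
  calc |q.eval t| ≤ c * (2 ^ σ) ^ ((i : ℝ) - 1) * √(∫ s in (-1 : ℝ)..1, q.eval s ^ 2) :=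
        hc q hq _ (one_le_pow₀ one_le_two) t ht
    _ = _ := by field_simp

/-- One-dimensional polynomial growth lemma: for a polynomial of degree `< i`, an
interval `I` centered at `x₀` with half-length `ρ` (so `|I| = 2ρ`), and `σ ≥ 0`,
`sup_{2^σ I} |p| ≤ C · 2^{σ(i-1)} (|I|⁻¹ ∫_I |p|²)^{1/2}` with `C = C(i)`. -/
theorem stmt5 (i : ℕ) (hi : 0 < i) :
    ∃ C : ℝ, ∀ p : Polynomial ℝ, p.degree < (i : WithBot ℕ) →
      ∀ (x₀ ρ : ℝ), 0 < ρ → ∀ σ : ℕ,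
      ∀ x ∈ Set.Icc (x₀ - 2 ^ σ * ρ) (x₀ + 2 ^ σ * ρ),
        |p.eval x| ≤ C * 2 ^ ((σ : ℝ) * ((i : ℝ) - 1)) *
          Real.sqrt ((2 * ρ)⁻¹ * ∫ y in Set.Icc (x₀ - ρ) (x₀ + ρ), (p.eval y) ^ 2) :=
  stmt5_general i
end

section
/- With θ_v(t) = A^v θ(A^v t), θ ∈ 𝒮(ℝ), A > 1, r ∈ ℕ, and p_{v,I} the Taylor approximations as above, the following holds: for any interval I with center x₀, any x ∈ I, and any τ ∉ 2I, (Σ_{v ∈ ℤ} |θ_v(x-τ) - p_{v,I}(x,τ)|²)^{1/2} ≤ C_r |I|^r / |τ - x₀|^{r+1}, where C_r depends only on θ and r. -/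
open Set Finset
open scoped Nat

/-! By Taylor's theorem the `v`-th term is at most `|I|^r` times the supremum of `|θ_v^{(r)}|` on
the segment from `x₀ - τ` to `x - τ`, all of whose points have modulus at least `D / 2`, where
`D = |τ - x₀|`. Since `θ_v^{(r)}(ξ) = A^{v(r+1)} θ^{(r)}(A^v ξ)`, boundedness and decay of order
`r + 2` of `θ^{(r)}` bound that supremum by `D^{-(r+1)} min(u^{r+1}, u⁻¹)` with `u = A^v D`.
Choosing `m` with `A^m ≤ D < A^{m+1}`, this is `O(D^{-(r+1)} A^{-|v + m|})`, and the square sum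
is dominated by a two-sided geometric series. -/

theorem norm_sub_sum_taylor_le {E : Type*} [NormedAddCommGroup E] [NormedSpace ℝ E]
    [CompleteSpace E] {f : ℝ → E} {n : ℕ} (hf : ContDiff ℝ (n + 1) f) {x₀ x B : ℝ}
    (hB : ∀ t ∈ uIcc x₀ x, ‖iteratedDeriv (n + 1) f t‖ ≤ B) :
    ‖f x - ∑ k ∈ range (n + 1), ((k ! : ℝ)⁻¹ * (x - x₀) ^ k) • iteratedDeriv k f x₀‖ ≤
      B * |x - x₀| ^ (n + 1) / n ! := by
  rcases eq_or_ne x₀ x with rfl | hne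
  · simp [sum_range_succ']
  have hderiv : ∀ k ≤ n + 1, ∀ t ∈ uIcc x₀ x,
      iteratedDerivWithin k f (uIcc x₀ x) t = iteratedDeriv k f t := fun k hk t ht =>
    iteratedDerivWithin_eq_iteratedDeriv (uniqueDiffOn_uIcc hne)
      (hf.of_le (by exact_mod_cast hk)).contDiffAt ht
  have hrem := taylor_integral_remainder (x := x) (x₀ := x₀) hf.contDiffOn
  rw [taylor_within_apply, sum_congr rfl fun k hk => by
    rw [hderiv k (mem_range.1 hk).le x₀ left_mem_uIcc]] at hrem
  rw [hrem]
  calc ‖∫ t in x₀..x, ((x - t) ^ n / n !) • iteratedDerivWithin (n + 1) f (uIcc x₀ x) t‖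
      ≤ |x - x₀| ^ n / n ! * B * |x - x₀| := by
        refine intervalIntegral.norm_integral_le_of_norm_le_const fun t ht => ?_
        have ht' : t ∈ uIcc x₀ x := uIoc_subset_uIcc ht
        rw [norm_smul, hderiv _ le_rfl t ht', Real.norm_eq_abs, abs_div, abs_pow, Nat.abs_cast]
        gcongr ?_ ^ _ / _ * ?_
        · exact abs_sub_right_of_mem_uIcc ht'
        · exact hB t ht'
    _ = B * |x - x₀| ^ (n + 1) / n ! := by ring

theorem norm_sub_sum_taylor_le_complex {f : ℝ → ℂ} {r : ℕ} (hr : 1 ≤ r) (hf : ContDiff ℝ r f)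
    {c y B : ℝ} (hB : ∀ t ∈ uIcc c y, ‖iteratedDeriv r f t‖ ≤ B) :
    ‖f y - ∑ k ∈ range r, iteratedDeriv k f c * ((y - c : ℝ) : ℂ) ^ k / (k ! : ℂ)‖ ≤
      B * |y - c| ^ r / (r - 1)! := by
  obtain ⟨n, rfl⟩ := Nat.exists_eq_add_of_le' hr
  refine le_of_eq_of_le ?_ (norm_sub_sum_taylor_le (mod_cast hf) hB)
  congr 2
  refine sum_congr rfl fun k _ => ?_
  rw [Complex.real_smul]
  push_cast
  ring

theorem norm_iteratedDeriv_dilation {f : ℝ → ℂ} {n : ℕ} (hf : ContDiff ℝ n f) {s : ℝ}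
    (hs : 0 ≤ s) (ξ : ℝ) :
    ‖iteratedDeriv n (fun t => (s : ℂ) * f (s * t)) ξ‖ =
      s ^ (n + 1) * ‖iteratedDeriv n f (s * ξ)‖ := by
  rw [iteratedDeriv_const_mul_field, iteratedDeriv_comp_const_smul hf, norm_mul, norm_smul,
    Complex.norm_real, Real.norm_eq_abs, norm_pow, Real.norm_eq_abs, abs_of_nonneg hs, pow_succ]
  ring

theorem min_pow_inv_le_geometric {A u : ℝ} (hA : 1 < A) {p : ℕ} (hp : p ≠ 0) {k : ℤ}
    (hu : u ∈ Ico (A ^ k) (A ^ (k + 1))) : min (u ^ p) u⁻¹ ≤ A * A⁻¹ ^ k.natAbs := by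
  have hA₀ : 0 < A := by linarith
  have hu₀ : 0 < u := (zpow_pos hA₀ k).trans_le hu.1
  rcases le_or_gt 0 k with hk | hk
  · calc min (u ^ p) u⁻¹ ≤ (A ^ k)⁻¹ :=
          (min_le_right _ _).trans (inv_anti₀ (zpow_pos hA₀ k) hu.1)
      _ = A⁻¹ ^ k.natAbs := by
        obtain ⟨j, rfl⟩ := Int.eq_ofNat_of_zero_le hk
        rw [zpow_natCast, Int.natAbs_natCast, inv_pow]
      _ ≤ A * A⁻¹ ^ k.natAbs := le_mul_of_one_le_left (by positivity) hA.le
  · have hu₁ : u ≤ 1 := hu.2.le.trans (zpow_le_one_of_nonpos₀ hA.le (by omega))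
    calc min (u ^ p) u⁻¹ ≤ u := (min_le_left _ _).trans (pow_le_of_le_one hu₀.le hu₁ hp)
      _ ≤ A ^ (k + 1) := hu.2.le
      _ = A * A⁻¹ ^ k.natAbs := by
        obtain ⟨j, rfl⟩ := Int.exists_eq_neg_ofNat hk.le
        rw [zpow_add_one₀ hA₀.ne', mul_comm, zpow_neg, zpow_natCast, Int.natAbs_neg,
          Int.natAbs_natCast, inv_pow]

theorem SchwartzMap.exists_norm_iteratedDeriv_dilation_le (θ : SchwartzMap ℝ ℂ) (n : ℕ) :
    ∃ K, 0 ≤ K ∧ ∀ s D ξ : ℝ, 0 < s → 0 < D → D ≤ 2 * |ξ| →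
      ‖iteratedDeriv n (fun t => (s : ℂ) * θ (s * t)) ξ‖ ≤
        K / D ^ (n + 1) * min ((s * D) ^ (n + 1)) (s * D)⁻¹ := by
  obtain ⟨M₀, hM₀, hdecay₀⟩ := θ.decay 0 n
  obtain ⟨M, -, hdecay⟩ := θ.decay (n + 2) n
  set K := max M₀ (2 ^ (n + 2) * M)
  refine ⟨K, hM₀.le.trans (le_max_left _ _), fun s D ξ hs hD hξ => ?_⟩
  rw [norm_iteratedDeriv_dilation (θ.smooth n) hs.le,
    ← norm_iteratedFDeriv_eq_norm_iteratedDeriv, mul_min_of_nonneg _ _ (by positivity)]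
  set N := ‖iteratedFDeriv ℝ n θ (s * ξ)‖
  refine le_min ?_ ?_
  · have hN : N ≤ K :=
      (show N ≤ M₀ by simpa using hdecay₀ (s * ξ)).trans (le_max_left _ _)
    calc s ^ (n + 1) * N ≤ s ^ (n + 1) * K := by gcongr
      _ = K / D ^ (n + 1) * (s * D) ^ (n + 1) := by field_simp; ring
  · have hsξ : s * D ≤ 2 * ‖s * ξ‖ := by
      rw [Real.norm_eq_abs, abs_mul, abs_of_pos hs]; nlinarith
    have hN : (s * D) ^ (n + 2) * N ≤ K := calc
      (s * D) ^ (n + 2) * N ≤ (2 * ‖s * ξ‖) ^ (n + 2) * N := by gcongr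
      _ = 2 ^ (n + 2) * (‖s * ξ‖ ^ (n + 2) * N) := by ring
      _ ≤ 2 ^ (n + 2) * M := by gcongr; exact hdecay _
      _ ≤ K := le_max_right _ _
    calc s ^ (n + 1) * N = (s * D) ^ (n + 2) * N / (D ^ (n + 1) * (s * D)) := by
          field_simp; ring
      _ ≤ K / (D ^ (n + 1) * (s * D)) := by gcongr
      _ = K / D ^ (n + 1) * (s * D)⁻¹ := by field_simp

theorem summable_pow_natAbs {q : ℝ} (hq₀ : 0 ≤ q) (hq : q < 1) :
    Summable fun n : ℤ => q ^ n.natAbs :=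
  .of_nat_of_neg (by simpa using summable_geometric_of_lt_one hq₀ hq)
    (by simpa using summable_geometric_of_lt_one hq₀ hq)

theorem summable_sq_and_sqrt_tsum_sq_le {E : Type*} [SeminormedAddCommGroup E] {t : ℤ → E}
    {q c : ℝ} (hq₀ : 0 ≤ q) (hq : q < 1) (hc : 0 ≤ c) (m : ℤ)
    (ht : ∀ v, ‖t v‖ ≤ c * q ^ (v + m).natAbs) :
    Summable (fun v => ‖t v‖ ^ 2) ∧
      √(∑' v, ‖t v‖ ^ 2) ≤ c * √(∑' n : ℤ, (q ^ 2) ^ n.natAbs) := by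
  have hgeom := summable_pow_natAbs (pow_nonneg hq₀ 2) (by nlinarith)
  have hshift : Summable fun v : ℤ => c ^ 2 * (q ^ 2) ^ (v + m).natAbs :=
    ((Equiv.addRight m).summable_iff.mpr hgeom).mul_left _
  have hsq : ∀ v, ‖t v‖ ^ 2 ≤ c ^ 2 * (q ^ 2) ^ (v + m).natAbs := fun v => by
    rw [← pow_mul, mul_comm 2, pow_mul, ← mul_pow]
    exact pow_le_pow_left₀ (norm_nonneg _) (ht v) 2
  have hsum : Summable fun v => ‖t v‖ ^ 2 :=
    hshift.of_nonneg_of_le (fun _ => by positivity) hsq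
  refine ⟨hsum, ?_⟩
  calc √(∑' v, ‖t v‖ ^ 2) ≤ √(c ^ 2 * ∑' n : ℤ, (q ^ 2) ^ n.natAbs) := by
        gcongr
        rw [← (Equiv.addRight m).tsum_eq fun n => (q ^ 2) ^ n.natAbs, ← tsum_mul_left]
        exact hsum.tsum_le_tsum hsq hshift
    _ = c * √(∑' n : ℤ, (q ^ 2) ^ n.natAbs) := by
        rw [Real.sqrt_mul (by positivity), Real.sqrt_sq hc]

theorem norm_dilation_sub_taylor_le {f : ℝ → ℂ} {r : ℕ} (hr : 1 ≤ r) (hf : ContDiff ℝ r f)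
    {K A : ℝ} (hK₀ : 0 ≤ K) (hA : 1 < A)
    (hK : ∀ s D ξ : ℝ, 0 < s → 0 < D → D ≤ 2 * |ξ| →
      ‖iteratedDeriv r (fun t => (s : ℂ) * f (s * t)) ξ‖ ≤
        K / D ^ (r + 1) * min ((s * D) ^ (r + 1)) (s * D)⁻¹)
    {c y D : ℝ} (hD : 0 < D) (hfar : ∀ ξ ∈ uIcc c y, D ≤ 2 * |ξ|) {m : ℤ}
    (hm : D ∈ Ico (A ^ m) (A ^ (m + 1))) (v : ℤ) :
    ‖(A : ℂ) ^ v * f (A ^ v * y) - ∑ k ∈ range r,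
        iteratedDeriv k (fun t => (A : ℂ) ^ v * f (A ^ v * t)) c * ((y - c : ℝ) : ℂ) ^ k /
          (k ! : ℂ)‖ ≤
      K * A / (r - 1)! * |y - c| ^ r / D ^ (r + 1) * A⁻¹ ^ (v + m).natAbs := by
  have hA₀ : 0 < A := by linarith
  have hs : 0 < A ^ v := zpow_pos hA₀ v
  have hderiv : ∀ ξ ∈ uIcc c y, ‖iteratedDeriv r (fun t => (A : ℂ) ^ v * f (A ^ v * t)) ξ‖ ≤
      K / D ^ (r + 1) * (A * A⁻¹ ^ (v + m).natAbs) := by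
    intro ξ hξ
    have hu : A ^ v * D ∈ Ico (A ^ (v + m)) (A ^ (v + m + 1)) := by
      refine ⟨?_, ?_⟩
      · rw [zpow_add₀ hA₀.ne']; gcongr; exact hm.1
      · rw [add_assoc, zpow_add₀ hA₀.ne']; gcongr; exact hm.2
    have h := hK (A ^ v) D ξ hs hD (hfar ξ hξ)
    rw [Complex.ofReal_zpow] at h
    refine h.trans ?_
    gcongr
    exact min_pow_inv_le_geometric hA (by omega) hu
  have hf' : ContDiff ℝ r fun t => (A : ℂ) ^ v * f (A ^ v * t) :=
    contDiff_const.mul (hf.comp (contDiff_const.mul contDiff_id))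
  refine (norm_sub_sum_taylor_le_complex hr hf' hderiv).trans_eq ?_
  ring

/-- Square-function smoothness estimate for the kernel `{θ_v(x-τ)}`: with
`θ_v(t) = A^v θ(A^v t)` and `p_{v,I}` the Taylor approximations of degree `r-1` at
`x₀ - τ`, for `x ∈ I` (center `x₀`, half-length `ρ`) and `τ ∉ 2I`,
`(Σ_v |θ_v(x-τ) - p_{v,I}(x,τ)|²)^{1/2} ≤ C_r |I|^r / |τ-x₀|^{r+1}`. -/
theorem stmt12 (θ : SchwartzMap ℝ ℂ) (A : ℝ) (hA : 1 < A) (r : ℕ) (hr : 1 ≤ r) :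
    ∃ C : ℝ, ∀ (x₀ ρ : ℝ), 0 < ρ →
      ∀ x ∈ Set.Icc (x₀ - ρ) (x₀ + ρ),
      ∀ τ ∉ Set.Icc (x₀ - 2 * ρ) (x₀ + 2 * ρ),
      Summable (fun v : ℤ =>
        ‖((A : ℂ) ^ v) * θ ((A : ℝ) ^ v * (x - τ)) -
            ∑ α ∈ Finset.range r,
              iteratedDeriv α (fun t : ℝ => ((A : ℂ) ^ v) * θ ((A : ℝ) ^ v * t)) (x₀ - τ) *
                ((x - x₀ : ℝ) : ℂ) ^ α / (α.factorial : ℂ)‖ ^ 2) ∧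
      Real.sqrt (∑' v : ℤ,
        ‖((A : ℂ) ^ v) * θ ((A : ℝ) ^ v * (x - τ)) -
            ∑ α ∈ Finset.range r,
              iteratedDeriv α (fun t : ℝ => ((A : ℂ) ^ v) * θ ((A : ℝ) ^ v * t)) (x₀ - τ) *
                ((x - x₀ : ℝ) : ℂ) ^ α / (α.factorial : ℂ)‖ ^ 2) ≤
        C * (2 * ρ) ^ r / |τ - x₀| ^ (r + 1) := by
  obtain ⟨K, hK₀, hK⟩ := θ.exists_norm_iteratedDeriv_dilation_le r
  have hq₀ : 0 ≤ A⁻¹ := inv_nonneg.2 (by linarith)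
  refine ⟨K * A / (r - 1)! * √(∑' n : ℤ, (A⁻¹ ^ 2) ^ n.natAbs),
    fun x₀ ρ hρ x hx τ hτ => ?_⟩
  have hxρ : |x - x₀| ≤ ρ := by rw [abs_sub_comm]; exact mem_Icc_iff_abs_le.2 hx
  have hτρ : 2 * ρ < |τ - x₀| := by
    rw [abs_sub_comm]; exact lt_of_not_ge (mt mem_Icc_iff_abs_le.1 hτ)
  have hD : 0 < |τ - x₀| := by linarith
  have hfar : ∀ ξ ∈ uIcc (x₀ - τ) (x - τ), |τ - x₀| ≤ 2 * |ξ| := by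
    intro ξ hξ
    have h := abs_sub_left_of_mem_uIcc hξ
    rw [sub_sub_sub_cancel_right] at h
    linarith [abs_sub_comm τ x₀, abs_sub_abs_le_abs_sub (x₀ - τ) ξ, abs_sub_comm (x₀ - τ) ξ]
  obtain ⟨m, hm⟩ := exists_mem_Ico_zpow hD hA
  refine (summable_sq_and_sqrt_tsum_sq_le hq₀ (inv_lt_one_of_one_lt₀ hA)
    (c := K * A / (r - 1)! * (2 * ρ) ^ r / |τ - x₀| ^ (r + 1)) (by positivity) m
    fun v => ?_).imp_right fun h => h.trans_eq (by ring)
  have h := norm_dilation_sub_taylor_le hr (θ.smooth r) hK₀ hA hK hD hfar hm v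
  rw [sub_sub_sub_cancel_right] at h
  exact h.trans (by gcongr; linarith)
end

section
/- Let φ ∈ 𝒮(ℝ), r ∈ ℕ, l > 0, δ ∈ ℝ with |δ| ≤ l, and set Φ(t) = e^{-2πi δ t} · l·φ(l t). Let I be an interval with center τ₀ and let p_I(τ,t) be the Taylor polynomial in τ of degree r-1 of the function τ ↦ Φ(τ - t) around τ₀. Then for all τ ∈ I and t ∉ 2I: |Φ(τ - t) - p_I(τ,t)| ≤ C_r |I|^r / |t - τ₀|^{r+1}, where C_r depends only on φ and r (not on l, δ, I, or t). -/
/-!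
Taylor's theorem with integral remainder bounds the error by `|τ - τ₀|^r` times the sup of
`|Φ^{(r)}|` on the segment between `τ₀ - t` and `τ - t`, where `|u| ≥ |t - τ₀| / 2`.
By Leibniz, the `i`-th term of `|Φ^{(r)}(u)|` is at most `(2π|δ|)^i l^{r-i+1} |φ^{(r-i)}(l u)|`;
multiplied by `|u|^{r+1}` this is `(2π|δ|/l)^i |l u|^{r+1} |φ^{(r-i)}(l u)|`, which a Schwartz
seminorm of `φ` bounds uniformly in `l` because `|δ| ≤ l`.
-/

open Real Set Finset
open scoped SchwartzMap ContDiff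

theorem norm_sub_sum_iteratedDeriv_le {f : ℝ → ℂ} {r : ℕ} (hf : ContDiff ℝ r f) {x₀ x M : ℝ}
    (hM : ∀ y ∈ uIcc x₀ x, ‖iteratedDeriv r f y‖ ≤ M) :
    ‖f x - ∑ k ∈ range r, iteratedDeriv k f x₀ * ((x - x₀ : ℝ) : ℂ) ^ k / (k.factorial : ℂ)‖ ≤
      M * |x - x₀| ^ r := by
  obtain _ | n := r
  · simpa using hM x right_mem_uIcc
  have hderiv : ∀ k ≤ n + 1, ∀ y ∈ uIcc x₀ x, x₀ ≠ x →
      iteratedDerivWithin k f (uIcc x₀ x) y = iteratedDeriv k f y := fun k hk y hy hne =>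
    iteratedDerivWithin_eq_iteratedDeriv (uniqueDiffOn_uIcc hne)
      (hf.of_le (mod_cast hk)).contDiffAt hy
  have htaylor : ∑ k ∈ range (n + 1),
      iteratedDeriv k f x₀ * ((x - x₀ : ℝ) : ℂ) ^ k / (k.factorial : ℂ) =
        taylorWithinEval f n (uIcc x₀ x) x₀ x := by
    rw [taylor_within_apply]
    refine sum_congr rfl fun k hk => ?_
    rcases eq_or_ne x₀ x with rfl | hne
    · rcases eq_or_ne k 0 with rfl | hk0
      · simp
      · simp [zero_pow hk0]
    · rw [hderiv k (by grind) x₀ left_mem_uIcc hne, Complex.real_smul]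
      push_cast
      ring
  rw [htaylor, taylor_integral_remainder hf.contDiffOn]
  calc _ ≤ |x - x₀| ^ n * M * |x - x₀| := by
        refine intervalIntegral.norm_integral_le_of_norm_le_const fun y hy => ?_
        have hne : x₀ ≠ x := by rintro rfl; simp at hy
        have hy' : y ∈ uIcc x₀ x := uIoc_subset_uIcc hy
        rw [norm_smul, hderiv _ le_rfl y hy' hne, Real.norm_eq_abs, abs_div, abs_pow, Nat.abs_cast]
        gcongr
        · calc |x - y| ^ n / n.factorial ≤ |x - y| ^ n :=
                div_le_self (by positivity) (mod_cast n.factorial_pos)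
            _ ≤ |x - x₀| ^ n := pow_le_pow_left₀ (abs_nonneg _) (abs_sub_right_of_mem_uIcc hy') n
        · exact hM y hy'
    _ = M * |x - x₀| ^ (n + 1) := by ring

noncomputable def wavePacket (φ : 𝓢(ℝ, ℂ)) (l δ u : ℝ) : ℂ :=
  Complex.exp (-(2 * π * Complex.I * δ * u)) * ((l : ℂ) * φ (l * u))

theorem iteratedDeriv_cexp_mul_ofReal (c : ℂ) (n : ℕ) :
    iteratedDeriv n (fun u : ℝ => Complex.exp (c * u)) =
      fun u : ℝ => c ^ n * Complex.exp (c * u) := by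
  induction n with
  | zero => simp
  | succ n ih =>
    funext u
    have hderiv : HasDerivAt (fun u : ℝ => Complex.exp (c * u)) (Complex.exp (c * u) * c) u := by
      simpa using ((hasDerivAt_id u).ofReal_comp.const_mul c).cexp
    rw [iteratedDeriv_succ, ih, deriv_const_mul _ hderiv.differentiableAt, hderiv.deriv]
    ring

theorem norm_iteratedDeriv_modulation (δ : ℝ) (n : ℕ) (u : ℝ) :
    ‖iteratedDeriv n (fun u : ℝ => Complex.exp (-(2 * π * Complex.I * δ * u))) u‖ =
      (2 * π * |δ|) ^ n := by
  have h := iteratedDeriv_cexp_mul_ofReal (-(2 * π * Complex.I * δ)) n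
  simp only [neg_mul] at h
  rw [h, norm_mul, norm_pow, Complex.norm_exp]
  simp [abs_of_pos pi_pos]

theorem norm_iteratedDeriv_dilation_s14 (φ : 𝓢(ℝ, ℂ)) {l : ℝ} (hl : 0 < l) (m : ℕ) (u : ℝ) :
    ‖iteratedDeriv m (fun u : ℝ => (l : ℂ) * φ (l * u)) u‖ =
      l ^ (m + 1) * ‖iteratedDeriv m φ (l * u)‖ := by
  have hφ : ContDiff ℝ m φ := φ.smooth m
  have hφl : ContDiff ℝ m fun u : ℝ => φ (l * u) := hφ.comp (contDiff_const.mul contDiff_id)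
  rw [iteratedDeriv_const_mul _ hφl.contDiffAt,
    iteratedDeriv_comp_const_smul hφ, norm_mul, norm_smul, Complex.norm_real, Real.norm_eq_abs,
    Real.norm_eq_abs, abs_of_pos hl, abs_of_pos (pow_pos hl m), pow_succ]
  ring

theorem contDiff_modulation (δ : ℝ) :
    ContDiff ℝ ∞ fun u : ℝ => Complex.exp (-(2 * π * Complex.I * δ * u)) :=
  Complex.contDiff_exp.comp (contDiff_const.mul Complex.ofRealCLM.contDiff).neg

theorem contDiff_dilation (φ : 𝓢(ℝ, ℂ)) (l : ℝ) : ContDiff ℝ ∞ fun u : ℝ => (l : ℂ) * φ (l * u) :=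
  contDiff_const.mul ((φ.smooth ⊤).comp (contDiff_const.mul contDiff_id))

theorem contDiff_wavePacket (φ : 𝓢(ℝ, ℂ)) (l δ : ℝ) : ContDiff ℝ ∞ (wavePacket φ l δ) :=
  (contDiff_modulation δ).mul (contDiff_dilation φ l)

theorem abs_pow_mul_norm_iteratedDeriv_wavePacket_le (φ : 𝓢(ℝ, ℂ)) (r : ℕ) {l δ : ℝ}
    (hl : 0 < l) (hδ : |δ| ≤ l) (u : ℝ) :
    |u| ^ (r + 1) * ‖iteratedDeriv r (wavePacket φ l δ) u‖ ≤
      (2 * π + 1) ^ r * ∑ m ∈ range (r + 1), SchwartzMap.seminorm ℝ (r + 1) m φ := by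
  set S := ∑ m ∈ range (r + 1), SchwartzMap.seminorm ℝ (r + 1) m φ
  have hdecay : ∀ m ∈ range (r + 1), ∀ v : ℝ, |v| ^ (r + 1) * ‖iteratedDeriv m φ v‖ ≤ S :=
    fun m hm v => (φ.le_seminorm' ℝ _ m v).trans
      (single_le_sum (f := fun m => SchwartzMap.seminorm ℝ (r + 1) m φ)
        (fun _ _ => apply_nonneg _ _) hm)
  have hleibniz := norm_iteratedFDeriv_mul_le (contDiff_modulation δ) (contDiff_dilation φ l) u
    (n := r) (mod_cast le_top)
  simp only [norm_iteratedFDeriv_eq_norm_iteratedDeriv, norm_iteratedDeriv_modulation,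
    norm_iteratedDeriv_dilation_s14 φ hl] at hleibniz
  have hterm : ∀ i ∈ range (r + 1), |u| ^ (r + 1) * ((r.choose i : ℝ) * (2 * π * |δ|) ^ i *
      (l ^ (r - i + 1) * ‖iteratedDeriv (r - i) φ (l * u)‖)) ≤ r.choose i * (2 * π) ^ i * S := by
    intro i hi
    have hir : i ≤ r := Nat.lt_succ_iff.mp (mem_range.mp hi)
    have hpow : l ^ (r - i + 1) = l ^ (r + 1) / l ^ i := by
      rw [eq_div_iff (by positivity), ← pow_add]
      congr 1
      omega
    calc _ = r.choose i * (2 * π) ^ i * (|δ| / l) ^ i *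
          (|l * u| ^ (r + 1) * ‖iteratedDeriv (r - i) φ (l * u)‖) := by
          rw [hpow, abs_mul, abs_of_pos hl, div_pow, mul_pow, mul_pow, mul_pow]
          field_simp
      _ ≤ r.choose i * (2 * π) ^ i * 1 * S := by
          gcongr
          · exact pow_le_one₀ (by positivity) ((div_le_one hl).mpr hδ)
          · exact hdecay _ (mem_range.mpr (by omega)) _
      _ = r.choose i * (2 * π) ^ i * S := by rw [mul_one]
  calc |u| ^ (r + 1) * ‖iteratedDeriv r (wavePacket φ l δ) u‖
      ≤ ∑ i ∈ range (r + 1), |u| ^ (r + 1) * ((r.choose i : ℝ) * (2 * π * |δ|) ^ i *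
          (l ^ (r - i + 1) * ‖iteratedDeriv (r - i) φ (l * u)‖)) := by
        rw [← mul_sum]
        exact mul_le_mul_of_nonneg_left hleibniz (by positivity)
    _ ≤ ∑ i ∈ range (r + 1), r.choose i * (2 * π) ^ i * S := sum_le_sum hterm
    _ = (2 * π + 1) ^ r * S := by
        rw [add_pow, sum_mul]
        exact sum_congr rfl fun i _ => by ring

theorem abs_sub_le_two_mul_abs_of_mem_uIcc {τ₀ τ t ρ y : ℝ} (hτ : |τ₀ - τ| ≤ ρ)
    (ht : 2 * ρ < |τ₀ - t|) (hy : y ∈ uIcc (τ₀ - t) (τ - t)) : |τ₀ - t| ≤ 2 * |y| := by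
  have hyτ : |y - (τ₀ - t)| ≤ |τ₀ - τ| := by
    simpa [abs_sub_comm τ] using abs_sub_left_of_mem_uIcc hy
  have htri : |τ₀ - t| ≤ |y| + |y - (τ₀ - t)| := by
    simpa using abs_sub y (y - (τ₀ - t))
  linarith

theorem stmt14_general (φ : SchwartzMap ℝ ℂ) (r : ℕ) :
    ∃ C : ℝ, ∀ (l δ : ℝ), 0 < l → |δ| ≤ l → ∀ (τ₀ ρ : ℝ), 0 < ρ →
      ∀ τ ∈ Set.Icc (τ₀ - ρ) (τ₀ + ρ), ∀ t ∉ Set.Icc (τ₀ - 2 * ρ) (τ₀ + 2 * ρ),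
      ‖(fun u : ℝ => Complex.exp (-(2 * π * Complex.I * δ * u)) * ((l : ℂ) * φ (l * u)))
            (τ - t) -
          ∑ α ∈ Finset.range r,
            iteratedDeriv α
              (fun u : ℝ => Complex.exp (-(2 * π * Complex.I * δ * u)) *
                ((l : ℂ) * φ (l * u))) (τ₀ - t) *
              ((τ - τ₀ : ℝ) : ℂ) ^ α / (α.factorial : ℂ)‖ ≤
        C * (2 * ρ) ^ r / |t - τ₀| ^ (r + 1) := by
  set K := (2 * π + 1) ^ r * ∑ m ∈ range (r + 1), SchwartzMap.seminorm ℝ (r + 1) m φ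
  refine ⟨2 * K, fun l δ hl hδ τ₀ ρ hρ τ hτ t ht => ?_⟩
  rw [abs_sub_comm t τ₀]
  have hτ' : |τ₀ - τ| ≤ ρ := mem_Icc_iff_abs_le.mpr hτ
  have ht' : 2 * ρ < |τ₀ - t| := not_le.mp (mt mem_Icc_iff_abs_le.mp ht)
  have hd : 0 < |τ₀ - t| := by linarith
  have hM : ∀ y ∈ uIcc (τ₀ - t) (τ - t),
      ‖iteratedDeriv r (wavePacket φ l δ) y‖ ≤ 2 ^ (r + 1) * K / |τ₀ - t| ^ (r + 1) := by
    intro y hy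
    rw [le_div_iff₀ (by positivity)]
    calc _ ≤ ‖iteratedDeriv r (wavePacket φ l δ) y‖ * (2 * |y|) ^ (r + 1) := by
          gcongr
          exact abs_sub_le_two_mul_abs_of_mem_uIcc hτ' ht' hy
      _ = 2 ^ (r + 1) * (|y| ^ (r + 1) * ‖iteratedDeriv r (wavePacket φ l δ) y‖) := by ring
      _ ≤ 2 ^ (r + 1) * K := by
          gcongr
          exact abs_pow_mul_norm_iteratedDeriv_wavePacket_le φ r hl hδ y
  have htaylor :=
    norm_sub_sum_iteratedDeriv_le ((contDiff_wavePacket φ l δ).of_le (mod_cast le_top)) hM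
  rw [sub_sub_sub_cancel_right, abs_sub_comm τ τ₀] at htaylor
  calc _ ≤ 2 ^ (r + 1) * K / |τ₀ - t| ^ (r + 1) * |τ₀ - τ| ^ r := htaylor
    _ ≤ 2 ^ (r + 1) * K / |τ₀ - t| ^ (r + 1) * ρ ^ r := by gcongr
    _ = 2 * K * (2 * ρ) ^ r / |τ₀ - t| ^ (r + 1) := by ring

/-- Kernel smoothness for the tweaking operator: with `Φ(t) = e^{-2πiδt} l φ(lt)`,
`0 < l`, `|δ| ≤ l`, and `p_I(τ,t)` the degree-`(r-1)` Taylor polynomial in `τ` of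
`τ ↦ Φ(τ-t)` around the center `τ₀` of `I`, one has for `τ ∈ I` and `t ∉ 2I`:
`|Φ(τ-t) - p_I(τ,t)| ≤ C_r |I|^r / |t-τ₀|^{r+1}` with `C_r = C(φ,r)`. -/
theorem stmt14 (φ : SchwartzMap ℝ ℂ) (r : ℕ) (hr : 1 ≤ r) :
    ∃ C : ℝ, ∀ (l δ : ℝ), 0 < l → |δ| ≤ l → ∀ (τ₀ ρ : ℝ), 0 < ρ →
      ∀ τ ∈ Set.Icc (τ₀ - ρ) (τ₀ + ρ), ∀ t ∉ Set.Icc (τ₀ - 2 * ρ) (τ₀ + 2 * ρ),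
      ‖(fun u : ℝ => Complex.exp (-(2 * π * Complex.I * δ * u)) * ((l : ℂ) * φ (l * u)))
            (τ - t) -
          ∑ α ∈ Finset.range r,
            iteratedDeriv α
              (fun u : ℝ => Complex.exp (-(2 * π * Complex.I * δ * u)) *
                ((l : ℂ) * φ (l * u))) (τ₀ - t) *
              ((τ - τ₀ : ℝ) : ℂ) ^ α / (α.factorial : ℂ)‖ ≤
        C * (2 * ρ) ^ r / |t - τ₀| ^ (r + 1) :=
  stmt14_general φ r
end
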